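/- arXiv:2503.05259 — 3 statements merged into one kernel-verified Lean document; each statement's English description precedes it below -/
import Mathlib

section
/- In G₇, the element z = s·t·u is central, has order 12, and the center of G₇ is exactly the cyclic subgroup generated by z (so Z(G₇) = {1, z, z², …, z¹¹}). -/
/-!
Every generator commutes with `z = stu`, because the relations say `stu = tus = ust`.
Modulo `⟨z⟩` we get `stu = 1`, so `G₇ ⧸ ⟨z⟩` is a quotient of the triangle group
`⟨a, b | a² = b³ = (ab)³ = 1⟩ ≅ A₄`, whose twelve elements a coset enumeration lists; hence
`[G₇ : ⟨z⟩] ≤ 12`. The action of `G₇` on the vertices of a tetrahedron kills `z` and has image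
`A₄`, of order 12 and with trivial centraliser, so `Z(G₇)` lies in its kernel; comparing
indices, that kernel is `⟨z⟩`, of index 12. A central subgroup of index `n` makes the transfer `g ↦ gⁿ` a homomorphism into
the centre, so `z¹² = s¹² t¹² u¹² = 1`. A two-dimensional representation over `𝔽₁₃` shows
that the order is not smaller.
-/

open Pointwise

namespace Tetra

def rels : Set (FreeGroup (Fin 3)) :=
  { FreeGroup.of 0 ^ 2, FreeGroup.of 1 ^ 3, FreeGroup.of 2 ^ 3,
    FreeGroup.of 0 * FreeGroup.of 1 * FreeGroup.of 2 *
      (FreeGroup.of 1 * FreeGroup.of 2 * FreeGroup.of 0)⁻¹,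
    FreeGroup.of 0 * FreeGroup.of 1 * FreeGroup.of 2 *
      (FreeGroup.of 2 * FreeGroup.of 0 * FreeGroup.of 1)⁻¹ }

/-- The group `G₇ = ⟨s, t, u | s² = t³ = u³ = 1, stu = tus = ust⟩`. -/
abbrev G7 := PresentedGroup rels

def s : G7 := PresentedGroup.of 0
def t : G7 := PresentedGroup.of 1
def u : G7 := PresentedGroup.of 2
def z : G7 := s * t * u

end Tetra

open Subgroup

theorem Subgroup.normal_of_le_center {G : Type*} [Group G] {H : Subgroup G}
    (h : H ≤ center G) : H.Normal :=
  ⟨fun n hn g => by rwa [mem_center_iff.mp (h hn) g, mul_inv_cancel_right]⟩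

theorem mul_pow_index_center {G : Type*} [Group G] [(center G).FiniteIndex] (a b : G) :
    (a * b) ^ (center G).index = a ^ (center G).index * b ^ (center G).index :=
  congrArg Subtype.val (map_mul (MonoidHom.transferCenterPow G) a b)

section TetrahedralWords

variable {Q : Type*} [Group Q] (a b : Q)

def tetraWord : Fin 12 → Q :=
  ![1, a, b, a * b, b * a, b * b, a * b * a, a * b * b, b * a * b, b * b * a, b * a * b * b,
    b * b * a * b]

theorem map_tetraWord {R : Type*} [Group R] (f : Q →* R) (i : Fin 12) :
    f (tetraWord a b i) = tetraWord (f a) (f b) i := by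
  fin_cases i <;> simp [tetraWord]

variable {a b}

theorem tetraWord_mul (ha : a ^ 2 = 1) (hb : b ^ 3 = 1) (hab : (a * b) ^ 3 = 1) (i : Fin 12) :
    tetraWord a b i * a = tetraWord a b (![1, 0, 4, 6, 2, 9, 3, 8, 7, 5, 11, 10] i) ∧
      tetraWord a b i * b = tetraWord a b (![2, 3, 5, 7, 8, 0, 9, 1, 10, 11, 4, 6] i) := by
  have a_inv : a⁻¹ = a := inv_eq_of_mul_eq_one_left (by rw [← sq, ha])
  have b_inv : b⁻¹ = b * b := inv_eq_of_mul_eq_one_left (by rw [← pow_three', hb])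
  have hab' : a * b * (a * b) * (a * b) = 1 := by rw [← pow_three', hab]
  -- length-reducing rules that bring every product `tetraWord a b i * a` (or `* b`) back to a word
  have e₁ : a * a = 1 := by rw [← sq, ha]
  have e₂ : b * (b * b) = 1 := by rw [← mul_assoc, ← pow_three', hb]
  have e₃ : a * (b * (a * b)) = b * (b * a) := by
    calc _ = a * b * (a * b) * (a * b) * (b⁻¹ * a⁻¹) := by group
      _ = _ := by rw [hab', a_inv, b_inv]; group
  have e₄ : b * (a * (b * a)) = a * (b * b) := by
    calc _ = a⁻¹ * (a * b * (a * b) * (a * b)) * b⁻¹ := by group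
      _ = _ := by rw [hab', a_inv, b_inv]; group
  have e₅ : a * (b * (b * a)) = b * (a * b) := by
    calc _ = a⁻¹ * b⁻¹ * a⁻¹ := by rw [a_inv, b_inv]; group
      _ = b * a * b * (a * b * (a * b) * (a * b))⁻¹ := by group
      _ = _ := by rw [hab', inv_one, mul_one]; group
  have e₆ : b * (b * (a * (b * b))) = a * (b * a) := by
    calc _ = a * b * (a * b) * (a * b) * (b⁻¹ * a⁻¹ * b⁻¹) := by rw [hab', a_inv, b_inv]; group
      _ = _ := by group
  fin_cases i <;> simp [tetraWord, mul_assoc, e₁, e₂, e₃, e₄, e₅, e₆]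

theorem tetraWord_surjective (ha : a ^ 2 = 1) (hb : b ^ 3 = 1) (hab : (a * b) ^ 3 = 1)
    (hgen : closure {a, b} = ⊤) : Function.Surjective (tetraWord a b) := by
  have mul_gen_mem (x g : Q) (hg : g = a ∨ g = b) (hx : x ∈ Set.range (tetraWord a b)) :
      x * g ∈ Set.range (tetraWord a b) := by
    obtain ⟨i, rfl⟩ := hx
    rcases hg with rfl | rfl
    exacts [⟨_, (tetraWord_mul ha hb hab i).1.symm⟩, ⟨_, (tetraWord_mul ha hb hab i).2.symm⟩]
  have a_inv : a⁻¹ = a := inv_eq_of_mul_eq_one_left (by rw [← sq, ha])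
  have b_inv : b⁻¹ = b * b := inv_eq_of_mul_eq_one_left (by rw [← pow_three', hb])
  intro g
  induction (hgen ▸ mem_top g : g ∈ closure {a, b}) using closure_induction_right with
  | one => exact ⟨0, rfl⟩
  | mul_right x _ g hg hx => exact mul_gen_mem x g hg hx
  | mul_inv_cancel x _ g hg hx =>
    rcases hg with rfl | rfl
    · rw [a_inv]; exact mul_gen_mem x _ (.inl rfl) hx
    · rw [b_inv, ← mul_assoc]; exact mul_gen_mem _ _ (.inr rfl) (mul_gen_mem x _ (.inr rfl) hx)

end TetrahedralWords

namespace Tetra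

lemma mk_eq_one_of_mem_rels {r : FreeGroup (Fin 3)} (h : r ∈ rels) :
    PresentedGroup.mk rels r = 1 :=
  (QuotientGroup.eq_one_iff _).mpr (subset_normalClosure h)

lemma s_sq : s ^ 2 = 1 := mk_eq_one_of_mem_rels (by simp [rels])
lemma t_cube : t ^ 3 = 1 := mk_eq_one_of_mem_rels (by simp [rels])
lemma u_cube : u ^ 3 = 1 := mk_eq_one_of_mem_rels (by simp [rels])

lemma z_eq_tus : z = t * u * s :=
  mul_inv_eq_one.mp (mk_eq_one_of_mem_rels (r := _ * (_ * _ * _)⁻¹) (by simp [rels]))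

lemma z_eq_ust : z = u * s * t :=
  mul_inv_eq_one.mp (mk_eq_one_of_mem_rels (r := _ * (_ * _ * _)⁻¹) (by simp [rels]))

lemma closure_stu : closure {s, t, u} = ⊤ := by
  rw [← PresentedGroup.closure_range_of rels]
  congr 1
  ext g
  simp [Fin.exists_fin_succ, s, t, u, eq_comm]

section Lift

variable {H : Type*} [Group H] {a b c : H}

def lift (ha : a ^ 2 = 1) (hb : b ^ 3 = 1) (hc : c ^ 3 = 1) (habc : a * b * c = b * c * a)
    (habc' : a * b * c = c * a * b) : G7 →* H :=
  PresentedGroup.toGroup (f := ![a, b, c]) <| by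
    intro r hr
    simp only [rels, Set.mem_insert_iff, Set.mem_singleton_iff] at hr
    rcases hr with rfl | rfl | rfl | rfl | rfl
    · simpa using ha
    · simpa using hb
    · simpa using hc
    · rw [map_mul, map_inv, mul_inv_eq_one]; simpa using habc
    · rw [map_mul, map_inv, mul_inv_eq_one]; simpa using habc'

variable (ha : a ^ 2 = 1) (hb : b ^ 3 = 1) (hc : c ^ 3 = 1) (habc : a * b * c = b * c * a)
    (habc' : a * b * c = c * a * b)

lemma lift_s : lift ha hb hc habc habc' s = a := PresentedGroup.toGroup.of _
lemma lift_t : lift ha hb hc habc habc' t = b := PresentedGroup.toGroup.of _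
lemma lift_u : lift ha hb hc habc habc' u = c := PresentedGroup.toGroup.of _

lemma lift_z : lift ha hb hc habc habc' z = a * b * c := by
  rw [z, map_mul, map_mul, lift_s, lift_t, lift_u]

end Lift

lemma z_mem_center : z ∈ center G7 := by
  rw [← centralizer_univ, ← coe_top, ← closure_stu, centralizer_closure]
  simp only [mem_centralizer_iff, Set.mem_insert_iff, Set.mem_singleton_iff, forall_eq_or_imp,
    forall_eq]
  refine ⟨?_, ?_, ?_⟩
  · calc s * z = s ^ 2 * (t * u) := by rw [z, sq]; group
      _ = t * u * s ^ 2 := by rw [s_sq, one_mul, mul_one]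
      _ = z * s := by rw [z_eq_tus, sq]; group
  · calc t * z = t * u * s * t := by rw [z_eq_ust]; group
      _ = z * t := by rw [z_eq_tus]
  · calc u * z = u * s * t * u := by rw [z]; group
      _ = z * u := by rw [z_eq_ust]

instance : (zpowers z).Normal := normal_of_le_center (zpowers_le.mpr z_mem_center)

lemma tetraWord_mk_surjective :
    Function.Surjective
      (tetraWord (QuotientGroup.mk' (zpowers z) s) (QuotientGroup.mk' (zpowers z) t)) := by
  set mk := QuotientGroup.mk' (zpowers z)
  have hu : mk u = (mk s * mk t)⁻¹ := by
    refine eq_inv_of_mul_eq_one_right ?_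
    rw [← map_mul, ← map_mul, QuotientGroup.mk'_apply, QuotientGroup.eq_one_iff]
    exact mem_zpowers z
  have hgen : closure {mk s, mk t} = ⊤ := by
    rw [eq_top_iff, ← map_top_of_surjective mk (QuotientGroup.mk'_surjective _), ← closure_stu,
      MonoidHom.map_closure, closure_le]
    simp only [Set.image_insert_eq, Set.image_singleton, Set.insert_subset_iff,
      Set.singleton_subset_iff, hu]
    exact ⟨subset_closure (.inl rfl), subset_closure (.inr rfl),
      inv_mem (mul_mem (subset_closure (.inl rfl)) (subset_closure (.inr rfl)))⟩
  refine tetraWord_surjective (by rw [← map_pow, s_sq, map_one])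
    (by rw [← map_pow, t_cube, map_one]) ?_ hgen
  rw [← inv_inj, ← inv_pow, ← hu, ← map_pow, u_cube, map_one, inv_one]

instance : (zpowers z).FiniteIndex :=
  have := Finite.of_surjective _ tetraWord_mk_surjective
  finiteIndex_of_finite_quotient

lemma index_zpowers_z_le : (zpowers z).index ≤ 12 :=
  (Nat.card_le_card_of_surjective _ tetraWord_mk_surjective).trans_eq (Nat.card_fin 12)

def permS : Equiv.Perm (Fin 4) := Equiv.swap 0 1 * Equiv.swap 2 3
def permT : Equiv.Perm (Fin 4) := Equiv.swap 0 2 * Equiv.swap 0 1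

def toPerm : G7 →* Equiv.Perm (Fin 4) :=
  lift (a := permS) (b := permT) (c := (permS * permT)⁻¹) (by decide) (by decide) (by decide)
    (by decide) (by decide)

lemma toPerm_s : toPerm s = permS := lift_s ..
lemma toPerm_t : toPerm t = permT := lift_t ..

lemma eq_one_of_commute_permS_permT :
    ∀ σ : Equiv.Perm (Fin 4), σ * permS = permS * σ → σ * permT = permT * σ → σ = 1 := by
  decide

lemma center_le_ker_toPerm : center G7 ≤ toPerm.ker := fun g hg =>
  eq_one_of_commute_permS_permT (toPerm g)
    (by rw [← toPerm_s, ← map_mul, ← map_mul, mem_center_iff.mp hg s])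
    (by rw [← toPerm_t, ← map_mul, ← map_mul, mem_center_iff.mp hg t])

lemma twelve_le_index_ker_toPerm : 12 ≤ toPerm.ker.index := by
  rw [index_ker]
  have hinj : Function.Injective (tetraWord permS permT) := by decide
  let f : Fin 12 → toPerm.range := fun i =>
    ⟨tetraWord permS permT i, tetraWord s t i, by rw [map_tetraWord, toPerm_s, toPerm_t]⟩
  simpa using Nat.card_le_card_of_injective f fun i j hij => hinj (congrArg Subtype.val hij)

lemma ker_toPerm : toPerm.ker = zpowers z := by
  have hle : zpowers z ≤ toPerm.ker := by
    rw [zpowers_le, MonoidHom.mem_ker, toPerm, lift_z, mul_inv_cancel]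
  refine (hle.eq_or_lt.resolve_right fun hlt => ?_).symm
  have := index_strictAnti hlt
  have := twelve_le_index_ker_toPerm
  have := index_zpowers_z_le
  omega

lemma center_eq_zpowers_z : center G7 = zpowers z :=
  le_antisymm (ker_toPerm ▸ center_le_ker_toPerm) (zpowers_le.mpr z_mem_center)

lemma index_center : (center G7).index = 12 := by
  rw [center_eq_zpowers_z]
  exact le_antisymm index_zpowers_z_le (ker_toPerm ▸ twelve_le_index_ker_toPerm)

instance : (center G7).FiniteIndex := ⟨by rw [index_center]; norm_num⟩

lemma z_pow_twelve : z ^ 12 = 1 := by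
  calc z ^ 12 = s ^ 12 * t ^ 12 * u ^ 12 := by
        rw [z, ← index_center, mul_pow_index_center, mul_pow_index_center]
    _ = (s ^ 2) ^ 6 * (t ^ 3) ^ 4 * (u ^ 3) ^ 4 := by simp only [← pow_mul]
    _ = 1 := by rw [s_sq, t_cube, u_cube]; simp

def matS : (Matrix (Fin 2) (Fin 2) (ZMod 13))ˣ :=
  ⟨!![0, 1; 1, 0], !![0, 1; 1, 0], by decide, by decide⟩
def matT : (Matrix (Fin 2) (Fin 2) (ZMod 13))ˣ :=
  ⟨!![0, 2; 5, 4], !![10, 8; 7, 0], by decide, by decide⟩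
def matU : (Matrix (Fin 2) (Fin 2) (ZMod 13))ˣ :=
  ⟨!![3, 7; 0, 1], !![9, 2; 0, 1], by decide, by decide⟩

def toGL : G7 →* (Matrix (Fin 2) (Fin 2) (ZMod 13))ˣ :=
  lift (a := matS) (b := matT) (c := matU) (Units.ext (by decide)) (Units.ext (by decide))
    (Units.ext (by decide)) (Units.ext (by decide)) (Units.ext (by decide))

-- `z` acts as the scalar `2`, a primitive root mod 13.
lemma toGL_z : toGL z = ⟨!![2, 0; 0, 2], !![7, 0; 0, 7], by decide, by decide⟩ :=
  (lift_z ..).trans (Units.ext (by decide))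

lemma orderOf_z : orderOf z = 12 := by
  refine orderOf_eq_of_pow_and_pow_div_prime (by norm_num) z_pow_twelve fun p hp hp12 => ?_
  have hp' : p = 2 ∨ p = 3 := by
    have := Nat.le_of_dvd (by norm_num) hp12
    interval_cases p <;> simp_all +decide
  intro h
  have := congrArg toGL h
  rw [map_pow, map_one, toGL_z, Units.ext_iff] at this
  rcases hp' with rfl | rfl <;> exact absurd this (by decide)

theorem statement0 :
    z ∈ Subgroup.center G7 ∧ orderOf z = 12 ∧
    Subgroup.center G7 = Subgroup.zpowers z :=
  ⟨z_mem_center, orderOf_z, center_eq_zpowers_z⟩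

end Tetra
end

section
/- For every natural number α and all indices i₁, i₂ ∈ {1, …, l}, the recursion formula (A^{α+m})_{i₁,i₂} = Σ_{p=0}^{m-1} Σ_{q=1}^{l} ζ^p_{i₁,q} · (A^{α+p})_{q,i₂} holds; that is, A^{α+m} = Σ_{p=0}^{m-1} Z^p · A^{α+p}, where Z^p is the l×l matrix (ζ^p_{i,q}). -/
open scoped BigOperators

section RecursionFromPowerRelation

variable {R H ι : Type*} [CommRing R] [Ring H] [Algebra R H] [Fintype ι]

theorem pow_add_mul_mul_eq_sum_of_pow_mul_eq_sum (z x w : H) {m : ℕ} (y : ι → H)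
    (c : Fin m → ι → R) (h : z ^ m * x = ∑ p : Fin m, ∑ q, c p q • (z ^ (p : ℕ) * y q))
    (α : ℕ) :
    z ^ (α + m) * x * w = ∑ p : Fin m, ∑ q, c p q • (z ^ (α + (p : ℕ)) * y q * w) := by
  calc z ^ (α + m) * x * w = z ^ α * (z ^ m * x) * w := by rw [pow_add, mul_assoc (z ^ α)]
    _ = _ := by
      simp only [h, Finset.mul_sum, Finset.sum_mul, mul_smul_comm, smul_mul_assoc, pow_add,
        mul_assoc]

theorem map_pow_add_mul_mul_eq_sum_of_pow_mul_eq_sum (τ : H →ₗ[R] R) (z x w : H) {m : ℕ} (y : ι → H)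
    (c : Fin m → ι → R) (h : z ^ m * x = ∑ p : Fin m, ∑ q, c p q • (z ^ (p : ℕ) * y q))
    (α : ℕ) :
    τ (z ^ (α + m) * x * w) = ∑ p : Fin m, ∑ q, c p q * τ (z ^ (α + (p : ℕ)) * y q * w) := by
  simp only [pow_add_mul_mul_eq_sum_of_pow_mul_eq_sum z x w y c h α, map_sum, map_smul,
    smul_eq_mul]

end RecursionFromPowerRelation

theorem statement18_general {R H : Type*} [CommRing R] [Ring H] [Algebra R H]
    (z : H)
    (m l : ℕ)
    (y : Fin l → H) (τ : H →ₗ[R] R)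
    (ζ : Fin m → Fin l → Fin l → R)
    (hζ : ∀ i : Fin l,
      z ^ m * y i = ∑ p : Fin m, ∑ q : Fin l, ζ p i q • (z ^ (p : ℕ) * y q))
    (A : ℕ → Matrix (Fin l) (Fin l) R)
    (hA : ∀ (α : ℕ) (i₁ i₂ : Fin l), A α i₁ i₂ = τ (z ^ α * y i₁ * y i₂)) :
    ∀ (α : ℕ),
      (∀ i₁ i₂ : Fin l,
        A (α + m) i₁ i₂ = ∑ p : Fin m, ∑ q : Fin l, ζ p i₁ q * A (α + (p : ℕ)) q i₂) ∧
      A (α + m) = ∑ p : Fin m, (Matrix.of fun i q' => ζ p i q') * A (α + (p : ℕ)) := by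
  intro α
  have entrywise : ∀ i₁ i₂ : Fin l,
      A (α + m) i₁ i₂ = ∑ p : Fin m, ∑ q : Fin l, ζ p i₁ q * A (α + (p : ℕ)) q i₂ := by
    intro i₁ i₂
    simpa only [hA] using map_pow_add_mul_mul_eq_sum_of_pow_mul_eq_sum τ z (y i₁) (y i₂) y (ζ · i₁) (hζ i₁) α
  refine ⟨entrywise, ?_⟩
  ext i₁ i₂
  simpa only [Matrix.sum_apply, Matrix.mul_apply, Matrix.of_apply] using entrywise i₁ i₂

theorem statement18 {R H : Type*} [CommRing R] [Ring H] [Algebra R H]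
    (z : H) (hz : ∀ h : H, z * h = h * z)
    (m l : ℕ) (hm : 1 ≤ m) (hl : 1 ≤ l)
    (y : Fin l → H) (τ : H →ₗ[R] R)
    (ζ : Fin m → Fin l → Fin l → R)
    (hζ : ∀ i : Fin l,
      z ^ m * y i = ∑ p : Fin m, ∑ q : Fin l, ζ p i q • (z ^ (p : ℕ) * y q))
    (A : ℕ → Matrix (Fin l) (Fin l) R)
    (hA : ∀ (α : ℕ) (i₁ i₂ : Fin l), A α i₁ i₂ = τ (z ^ α * y i₁ * y i₂)) :
    ∀ (α : ℕ),
      (∀ i₁ i₂ : Fin l,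
        A (α + m) i₁ i₂ = ∑ p : Fin m, ∑ q : Fin l, ζ p i₁ q * A (α + (p : ℕ)) q i₂) ∧
      A (α + m) = ∑ p : Fin m, (Matrix.of fun i q' => ζ p i q') * A (α + (p : ℕ)) :=
  statement18_general z m l y τ ζ hζ A hA
end

section
/- If the matrices A⁰, A¹, …, A^{m−1} are all symmetric, then the matrix A^k is symmetric for every k with 0 ≤ k ≤ 2m−2; consequently the (m·l)×(m·l) block matrix A whose ((k₁,i₁),(k₂,i₂))-entry is τ(z^{k₁+k₂} · y_{i₁} · y_{i₂}) for 0 ≤ k₁, k₂ ≤ m−1 is symmetric. -/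
/-!
Multiplying the relation for `z ^ m * y i` by `z ^ j` expresses both `τ (z ^ (m + j) * y i₁ * y i₂)`
and, since `z` is central, `τ (z ^ (m + j) * y i₂ * y i₁)` as the same `ζ`-combination of entries
of the matrices `A (j + p)` with `p < m`, transposed in the second case. Strong induction on the
exponent then makes every `A k` symmetric (not only those with `k ≤ 2m - 2`), and the block
matrix has the blocks `A (k₁ + k₂)`.
-/

open Finset

section

variable {R H ι : Type*} [CommRing R] [Ring H] [Algebra R H] [Fintype ι]
  {z : H} {m : ℕ} {y : ι → H} {ζ : Fin m → ι → ι → R}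

def gramMatrixPow (τ : H →ₗ[R] R) (z : H) (y : ι → H) (k : ℕ) : Matrix ι ι R :=
  Matrix.of fun i₁ i₂ => τ (z ^ k * y i₁ * y i₂)

theorem pow_add_mul_eq_sum
    (hζ : ∀ i, z ^ m * y i = ∑ p : Fin m, ∑ q, ζ p i q • (z ^ (p : ℕ) * y q)) (j : ℕ) (i : ι) :
    z ^ (m + j) * y i = ∑ p : Fin m, ∑ q, ζ p i q • (z ^ (j + p : ℕ) * y q) := by
  simp_rw [add_comm m j, pow_add, mul_assoc, hζ, mul_sum, mul_smul_comm]

theorem pow_add_mul_mul_eq_sum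
    (hζ : ∀ i, z ^ m * y i = ∑ p : Fin m, ∑ q, ζ p i q • (z ^ (p : ℕ) * y q))
    (j : ℕ) (i : ι) (x : H) :
    z ^ (m + j) * y i * x = ∑ p : Fin m, ∑ q, ζ p i q • (z ^ (j + p : ℕ) * y q * x) := by
  simp_rw [pow_add_mul_eq_sum hζ, sum_mul, smul_mul_assoc]

theorem pow_add_mul_mul_eq_sum_of_commute (hz : ∀ h, Commute z h)
    (hζ : ∀ i, z ^ m * y i = ∑ p : Fin m, ∑ q, ζ p i q • (z ^ (p : ℕ) * y q))
    (j : ℕ) (i : ι) (x : H) :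
    z ^ (m + j) * x * y i = ∑ p : Fin m, ∑ q, ζ p i q • (z ^ (j + p : ℕ) * x * y q) := by
  have hzx (n : ℕ) (a : H) : z ^ n * x * a = x * (z ^ n * a) := by
    rw [((hz x).pow_left n).eq, mul_assoc]
  simp_rw [hzx, pow_add_mul_eq_sum hζ, mul_sum, mul_smul_comm]

theorem gramMatrixPow_isSymm (hz : ∀ h, Commute z h)
    (hζ : ∀ i, z ^ m * y i = ∑ p : Fin m, ∑ q, ζ p i q • (z ^ (p : ℕ) * y q))
    (τ : H →ₗ[R] R) (hsym : ∀ k < m, (gramMatrixPow τ z y k).IsSymm) (k : ℕ) :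
    (gramMatrixPow τ z y k).IsSymm := by
  induction k using Nat.strong_induction_on with
  | _ k ih =>
    obtain hk | hk := lt_or_ge k m
    · exact hsym k hk
    obtain ⟨j, rfl⟩ := Nat.exists_eq_add_of_le hk
    refine Matrix.IsSymm.ext fun i₁ i₂ => ?_
    simp only [gramMatrixPow, Matrix.of_apply]
    rw [pow_add_mul_mul_eq_sum_of_commute hz hζ j i₁, pow_add_mul_mul_eq_sum hζ j i₁]
    simp only [map_sum, map_smul]
    refine sum_congr rfl fun p _ => sum_congr rfl fun q _ => ?_
    exact congrArg _ ((ih (j + p) (by omega)).apply q i₂)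

end

theorem statement19_general {R H : Type*} [CommRing R] [Ring H] [Algebra R H]
    (z : H) (hz : ∀ h : H, z * h = h * z)
    (m l : ℕ)
    (y : Fin l → H) (τ : H →ₗ[R] R)
    (ζ : Fin m → Fin l → Fin l → R)
    (hζ : ∀ i : Fin l,
      z ^ m * y i = ∑ p : Fin m, ∑ q : Fin l, ζ p i q • (z ^ (p : ℕ) * y q))
    (A : ℕ → Matrix (Fin l) (Fin l) R)
    (hA : ∀ (α : ℕ) (i₁ i₂ : Fin l), A α i₁ i₂ = τ (z ^ α * y i₁ * y i₂))
    (hsym : ∀ k < m, (A k).IsSymm) :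
    (∀ k ≤ 2 * m - 2, (A k).IsSymm) ∧
    (Matrix.of fun p q : Fin m × Fin l =>
      τ (z ^ ((p.1 : ℕ) + (q.1 : ℕ)) * y p.2 * y q.2)).IsSymm := by
  obtain rfl : A = gramMatrixPow τ z y := funext fun α => Matrix.ext (hA α)
  have hall := gramMatrixPow_isSymm hz hζ τ hsym
  refine ⟨fun k _ => hall k, Matrix.IsSymm.ext fun ⟨k₁, i₁⟩ ⟨k₂, i₂⟩ => ?_⟩
  simpa [gramMatrixPow, add_comm] using (hall (k₁ + k₂)).apply i₁ i₂

theorem statement19 {R H : Type*} [CommRing R] [Ring H] [Algebra R H]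
    (z : H) (hz : ∀ h : H, z * h = h * z)
    (m l : ℕ) (hm : 1 ≤ m) (hl : 1 ≤ l)
    (y : Fin l → H) (τ : H →ₗ[R] R)
    (ζ : Fin m → Fin l → Fin l → R)
    (hζ : ∀ i : Fin l,
      z ^ m * y i = ∑ p : Fin m, ∑ q : Fin l, ζ p i q • (z ^ (p : ℕ) * y q))
    (A : ℕ → Matrix (Fin l) (Fin l) R)
    (hA : ∀ (α : ℕ) (i₁ i₂ : Fin l), A α i₁ i₂ = τ (z ^ α * y i₁ * y i₂))
    (hsym : ∀ k < m, (A k).IsSymm) :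
    (∀ k ≤ 2 * m - 2, (A k).IsSymm) ∧
    (Matrix.of fun p q : Fin m × Fin l =>
      τ (z ^ ((p.1 : ℕ) + (q.1 : ℕ)) * y p.2 * y q.2)).IsSymm :=
  statement19_general z hz m l y τ ζ hζ A hA hsym
end
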